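/- For every fixed w ∈ W, the per-user utility f_w satisfies the following smoothness bound: let S ⊆ W, let α ≥ 0, and let g : S → W be any map with D(o_{g(s)}, o_s) ≤ α for every s ∈ S; let S̃ = g(S) be the image of S under g. Then |f_w(S) − f_w(S̃)| ≤ α / |W|. -/
import Mathlib


open Finset

/-- The per-user utility function `f_w(S) = (1/|W|) · ( min_{x∈X} D(x, o_w) −
min_{p ∈ {o_s : s∈S} ∪ X} D(p, o_w) )`. -/
noncomputable def utilw {W M : Type*} [Fintype W] [DecidableEq M] [MetricSpace M]
    (o : W → M) (X : Finset M) (hX : X.Nonempty) (w : W) (S : Finset W) : ℝ :=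
  (1 / (Fintype.card W : ℝ)) *
    (X.inf' hX (fun x => dist x (o w)) -
      (S.image o ∪ X).inf' (hX.mono Finset.subset_union_right)
        (fun p => dist p (o w)))

lemma inf'_le_inf'_add {β : Type*} (A B : Finset β) (hA : A.Nonempty) (hB : B.Nonempty)
    (f : β → ℝ) (α : ℝ) (h : ∀ a ∈ A, ∃ b ∈ B, f b ≤ f a + α) :
    B.inf' hB f ≤ A.inf' hA f + α := by
  obtain ⟨a, ha, hmin⟩ := A.exists_mem_eq_inf' hA f
  obtain ⟨b, hb, hfb⟩ := h a ha
  calc B.inf' hB f ≤ f b := Finset.inf'_le _ hb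
    _ ≤ f a + α := hfb
    _ = A.inf' hA f + α := by rw [hmin]

/-- For every fixed `w ∈ W`, the per-user utility `f_w` satisfies the smoothness bound:
if `g` maps each `s ∈ S` to a user whose attribute is within distance `α` of `o_s`,
and `S̃ = g(S)`, then `|f_w(S) − f_w(S̃)| ≤ α / |W|`. -/
theorem utilw_smooth {W M : Type*} [Fintype W] [Nonempty W] [DecidableEq W]
    [DecidableEq M] [MetricSpace M]
    (o : W → M) (X : Finset M) (hX : X.Nonempty) (w : W)
    (S : Finset W) (α : ℝ) (hα : 0 ≤ α) (g : W → W)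
    (hg : ∀ s ∈ S, dist (o (g s)) (o s) ≤ α) :
    |utilw o X hX w S - utilw o X hX w (S.image g)| ≤ α / (Fintype.card W : ℝ) := by
  set f : M → ℝ := fun p => dist p (o w) with hf
  set A := S.image o ∪ X
  set B := (S.image g).image o ∪ X
  have hA : A.Nonempty := hX.mono Finset.subset_union_right
  have hB : B.Nonempty := hX.mono Finset.subset_union_right
  have h1 : ∀ a ∈ A, ∃ b ∈ B, f b ≤ f a + α := by
    intro a ha
    rcases Finset.mem_union.1 ha with h | h
    · obtain ⟨s, hs, rfl⟩ := Finset.mem_image.1 h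
      refine ⟨o (g s), Finset.mem_union_left _ ?_, ?_⟩
      · exact Finset.mem_image.2 ⟨g s, Finset.mem_image_of_mem g hs, rfl⟩
      · calc f (o (g s)) ≤ dist (o (g s)) (o s) + dist (o s) (o w) := dist_triangle _ _ _
          _ ≤ f (o s) + α := by simp only [hf]; linarith [hg s hs]
    · exact ⟨a, Finset.mem_union_right _ h, by linarith⟩
  have h2 : ∀ b ∈ B, ∃ a ∈ A, f a ≤ f b + α := by
    intro b hb
    rcases Finset.mem_union.1 hb with h | h
    · obtain ⟨t, ht, rfl⟩ := Finset.mem_image.1 h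
      obtain ⟨s, hs, rfl⟩ := Finset.mem_image.1 ht
      refine ⟨o s, Finset.mem_union_left _ (Finset.mem_image_of_mem o hs), ?_⟩
      calc f (o s) ≤ dist (o s) (o (g s)) + dist (o (g s)) (o w) := dist_triangle _ _ _
        _ ≤ f (o (g s)) + α := by
            have := hg s hs
            rw [dist_comm] at this
            simp only [hf]; linarith
    · exact ⟨b, Finset.mem_union_right _ h, by linarith⟩
  have hba : B.inf' hB f ≤ A.inf' hA f + α := inf'_le_inf'_add A B hA hB f α h1
  have hab : A.inf' hA f ≤ B.inf' hB f + α := inf'_le_inf'_add B A hB hA f α h2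
  have hc : (0:ℝ) < (Fintype.card W : ℝ) := by
    exact_mod_cast Fintype.card_pos
  simp only [utilw]
  rw [← mul_sub]
  have : (X.inf' hX f - A.inf' hA f) - (X.inf' hX f - B.inf' hB f)
      = B.inf' hB f - A.inf' hA f := by ring
  rw [this, abs_mul, abs_of_pos (by positivity : (0:ℝ) < 1 / (Fintype.card W : ℝ))]
  have habs : |B.inf' hB f - A.inf' hA f| ≤ α := abs_le.2 ⟨by linarith, by linarith⟩
  calc 1 / (Fintype.card W : ℝ) * |B.inf' hB f - A.inf' hA f|
      ≤ 1 / (Fintype.card W : ℝ) * α := mul_le_mul_of_nonneg_left habs (by positivity)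
    _ = α / (Fintype.card W : ℝ) := by ring
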